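/- arXiv:2304.03146 — 8 statements merged into one kernel-verified Lean document; each statement's English description precedes it below -/
import Mathlib

section
/- Let (X, δ) be a metric space, ε > 0, and let (x₁,p₁),…,(x_ℓ,p_ℓ) be a sequence of pairs of points in X such that δ(x_i, p_j) ≤ 1 for all 1 ≤ j < i ≤ ℓ and δ(x_i, p_i) > 1 + ε for all i ∈ [ℓ]. Then the set of centers {x₂, …, x_ℓ} is an ε-packing, i.e., any two distinct centers x_i, x_j with 2 ≤ i < j ≤ ℓ satisfy δ(x_i, x_j) > ε. -/
/-- Centers of an ε-scattering form an ε-packing. -/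
theorem scattering_centers_packing {X : Type*} [MetricSpace X] (ε : ℝ) (hε : 0 < ε)
    (ℓ : ℕ) (x p : Fin ℓ → X)
    (hcov : ∀ i j : Fin ℓ, j < i → dist (x i) (p j) ≤ 1)
    (href : ∀ i : Fin ℓ, 1 + ε < dist (x i) (p i)) :
    ∀ i j : Fin ℓ, 1 ≤ (i : ℕ) → 1 ≤ (j : ℕ) → i ≠ j → ε < dist (x i) (x j) := by
  have key : ∀ i j : Fin ℓ, i < j → ε < dist (x i) (x j) := by
    intro i j hij
    have h1 := href i
    have h2 := hcov j i hij
    have htri := dist_triangle (x i) (x j) (p i)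
    have := dist_comm (x j) (p i)
    linarith
  intro i j _ _ hne
  rcases lt_or_gt_of_ne hne with h | h
  · exact key i j h
  · rw [dist_comm]; exact key j i h
end

section
/- In any metric space of doubling dimension d, every ε-scattering (for 0 < ε < 1) has length at most (1/ε)^{O(d)}. More precisely: if every ball of radius r can be covered by 2^d balls of radius r/2, then any ε-scattering has length at most 2^{d·⌈log₂(4/ε)⌉} + 1. -/
/-- Iterated doubling cover: a ball of radius `r` can be covered by `2^(d*k)`
balls of radius `r / 2^k`. -/
lemma iter_cover {M : Type*} [MetricSpace M] (d : ℕ)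
    (hdoub : ∀ (c : M) (r : ℝ), 0 < r → ∃ s : Finset M,
      s.card ≤ 2 ^ d ∧ Metric.closedBall c r ⊆ ⋃ y ∈ s, Metric.closedBall y (r / 2))
    (c : M) (r : ℝ) (hr : 0 < r) (k : ℕ) :
    ∃ s : Finset M, s.card ≤ 2 ^ (d * k) ∧
      Metric.closedBall c r ⊆ ⋃ y ∈ s, Metric.closedBall y (r / 2 ^ k) := by
  classical
  induction k with
  | zero =>
    refine ⟨{c}, by simp, ?_⟩
    simp
  | succ k ih =>
    obtain ⟨s, hcard, hsub⟩ := ih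
    have hpos : (0:ℝ) < r / 2 ^ k := by positivity
    choose t ht1 ht2 using fun y : M => hdoub y (r / 2 ^ k) hpos
    refine ⟨s.biUnion t, ?_, ?_⟩
    · calc (s.biUnion t).card ≤ s.card * 2 ^ d := by
            refine le_trans (Finset.card_biUnion_le) ?_
            exact Finset.sum_le_card_nsmul _ _ _ (fun y _ => ht1 y)
        _ ≤ 2 ^ (d * k) * 2 ^ d := by exact Nat.mul_le_mul_right _ hcard
        _ = 2 ^ (d * (k + 1)) := by ring
    · intro z hz
      have hz' := hsub hz
      rw [Set.mem_iUnion₂] at hz'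
      obtain ⟨y, hy, hzy⟩ := hz'
      have := ht2 y hzy
      rw [Set.mem_iUnion₂] at this
      obtain ⟨w, hw, hzw⟩ := this
      rw [Set.mem_iUnion₂]
      refine ⟨w, Finset.mem_biUnion.2 ⟨y, hy, hw⟩, ?_⟩
      have : r / 2 ^ k / 2 = r / 2 ^ (k + 1) := by ring
      rwa [this] at hzw

/-- In a metric space of doubling dimension `d`, any ε-scattering (0 < ε < 1) has
length at most `2 ^ (d * ⌈log₂ (4/ε)⌉) + 1`. -/
theorem scattering_length_doubling {M : Type*} [MetricSpace M] (d : ℕ)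
    (hdoub : ∀ (c : M) (r : ℝ), 0 < r → ∃ s : Finset M,
      s.card ≤ 2 ^ d ∧ Metric.closedBall c r ⊆ ⋃ y ∈ s, Metric.closedBall y (r / 2))
    (ε : ℝ) (hε0 : 0 < ε) (hε1 : ε < 1)
    (ℓ : ℕ) (x p : Fin ℓ → M)
    (hcov : ∀ i j : Fin ℓ, j < i → dist (x i) (p j) ≤ 1)
    (href : ∀ i : Fin ℓ, 1 + ε < dist (x i) (p i)) :
    ℓ ≤ 2 ^ (d * ⌈Real.logb 2 (4 / ε)⌉₊) + 1 := by
  set k := ⌈Real.logb 2 (4 / ε)⌉₊ with hk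
  have hpow1 : 1 ≤ 2 ^ (d * k) := Nat.one_le_two_pow
  by_cases hℓ : ℓ ≤ 1
  · omega
  push_neg at hℓ
  -- 1/2^k ≤ ε/4
  have h4ε : (1:ℝ) < 4 / ε := by
    rw [lt_div_iff₀ hε0]; linarith
  have hkey : (4 / ε : ℝ) ≤ 2 ^ k := by
    have h1 : Real.logb 2 (4 / ε) ≤ (k : ℝ) := Nat.le_ceil _
    have h2 : (4 / ε : ℝ) = 2 ^ Real.logb 2 (4 / ε) :=
      (Real.rpow_logb (by norm_num) (by norm_num) (by linarith)).symm
    calc (4 / ε : ℝ) = 2 ^ Real.logb 2 (4 / ε) := h2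
      _ ≤ (2:ℝ) ^ (k : ℝ) := Real.rpow_le_rpow_of_exponent_le one_le_two h1
      _ = 2 ^ k := by rw [Real.rpow_natCast]
  have hsmall : (1:ℝ) / 2 ^ k ≤ ε / 4 := by
    rw [div_le_div_iff₀ (by positivity) (by norm_num)]
    calc (1:ℝ) * 4 = (4 / ε) * ε := by field_simp
      _ ≤ 2 ^ k * ε := by
          exact mul_le_mul_of_nonneg_right hkey (le_of_lt hε0)
      _ = ε * 2 ^ k := by ring
  -- separation
  have hsep : ∀ i j : Fin ℓ, i < j → ε < dist (x i) (x j) := by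
    intro i j hij
    have h1 := href i
    have h2 := hcov j i hij
    have h3 : dist (x i) (p i) ≤ dist (x i) (x j) + dist (x j) (p i) :=
      dist_triangle _ _ _
    linarith
  -- cover ball of radius 1 around p 0
  set z0 : Fin ℓ := ⟨0, by omega⟩ with hz0
  obtain ⟨s, hcard, hsub⟩ := iter_cover d hdoub (p z0) 1 one_pos k
  -- each x i (i ≥ 1) lies in the ball
  have hmem : ∀ i : Fin (ℓ - 1), x ⟨i + 1, by omega⟩ ∈ Metric.closedBall (p z0) 1 := by
    intro i
    exact hcov ⟨i + 1, by omega⟩ z0 (by simp [hz0, Fin.lt_def])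
  -- choose a covering center for each
  have hch : ∀ i : Fin (ℓ - 1), ∃ y ∈ s,
      x ⟨i + 1, by omega⟩ ∈ Metric.closedBall y (1 / 2 ^ k) := by
    intro i
    have := hsub (hmem i)
    rw [Set.mem_iUnion₂] at this
    obtain ⟨y, hy, hxy⟩ := this
    exact ⟨y, hy, hxy⟩
  choose F hFs hFd using hch
  have key : ∀ i j : Fin (ℓ - 1), i < j → F i ≠ F j := by
    intro i j hlt hij
    have hd1 := hFd i
    have hd2 := hFd j
    rw [Metric.mem_closedBall] at hd1 hd2
    have hs := hsep ⟨i + 1, by omega⟩ ⟨j + 1, by omega⟩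
      (Fin.mk_lt_mk.2 (by have := Fin.lt_def.1 hlt; omega))
    have : dist (x ⟨i + 1, by omega⟩) (x ⟨j + 1, by omega⟩) ≤
        dist (x ⟨i + 1, by omega⟩) (F i) + dist (F j) (x ⟨j + 1, by omega⟩) := by
      rw [hij]; exact dist_triangle _ _ _
    rw [dist_comm (F j)] at this
    linarith
  have hinj : Function.Injective F := by
    intro i j hij
    rcases lt_trichotomy i j with h | h | h
    · exact absurd hij (key i j h)
    · exact h
    · exact absurd hij.symm (key j i h)
  have hcount : ℓ - 1 ≤ s.card := by
    have := Finset.card_le_card_of_injOn (s := Finset.univ) (t := s) F (fun i _ => hFs i) (hinj.injOn)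
    simpa using this
  omega
end

section
/- Let f : ℝ^n → ℝ be a monotone norm (a norm satisfying f(x) ≤ f(y) whenever 0 ≤ x ≤ y coordinatewise). Then at every point x ∈ ℝ^n_{≥0}, f has a subgradient g with g ≥ 0 coordinatewise. -/
/-!
Replace `f` by its monotone envelope `F y = inf {f z | y ≤ z}`. It is again sublinear, lies below
`f`, agrees with `f` on the nonnegative orthant because `f` is monotone there, and is at most
`f 0 = 0` on the nonpositive orthant. A Hahn–Banach functional `ℓ ≤ F` with `ℓ x = F x` is then a
subgradient of `f` at `x`, and `ℓ (-v) ≤ F (-v) ≤ 0` for `v ≥ 0` makes its coefficients nonnegative.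
-/

open Set

section Sublinear

variable {E : Type*} [AddCommGroup E] [Module ℝ E] {N : E → ℝ}

theorem map_zero_of_posHomogeneous (N_hom : ∀ c : ℝ, 0 < c → ∀ x, N (c • x) = c * N x) :
    N 0 = 0 := by
  have h := N_hom 2 two_pos 0
  rw [smul_zero] at h
  linarith

theorem mul_le_map_smul_of_sublinear (N_hom : ∀ c : ℝ, 0 < c → ∀ x, N (c • x) = c * N x)
    (N_add : ∀ x y, N (x + y) ≤ N x + N y) (c : ℝ) (x : E) : c * N x ≤ N (c • x) := by
  rcases lt_trichotomy c 0 with hc | rfl | hc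
  · have h := N_add (c • x) ((-c) • x)
    rw [← add_smul, add_neg_cancel, zero_smul, map_zero_of_posHomogeneous N_hom,
      N_hom _ (neg_pos.2 hc)] at h
    linarith
  · simp [map_zero_of_posHomogeneous N_hom]
  · exact (N_hom c hc x).ge

theorem exists_linearMap_le_sublinear_eq (N_hom : ∀ c : ℝ, 0 < c → ∀ x, N (c • x) = c * N x)
    (N_add : ∀ x y, N (x + y) ≤ N x + N y) (x : E) :
    ∃ ℓ : E →ₗ[ℝ] ℝ, (∀ y, ℓ y ≤ N y) ∧ ℓ x = N x := by
  have hN0 := map_zero_of_posHomogeneous N_hom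
  let p : E →ₗ.[ℝ] ℝ := LinearPMap.mkSpanSingleton' x (N x) fun c hc => by
    rcases smul_eq_zero.1 hc with rfl | rfl
    · exact zero_smul _ _
    · rw [hN0, smul_zero]
  have hp : ∀ y : p.domain, p y ≤ N y := by
    rintro ⟨y, hy⟩
    obtain ⟨c, rfl⟩ := Submodule.mem_span_singleton.1 hy
    exact (LinearPMap.mkSpanSingleton'_apply _ _ _ c hy).trans_le
      (mul_le_map_smul_of_sublinear N_hom N_add c x)
  obtain ⟨ℓ, hℓp, hℓN⟩ := exists_extension_of_le_sublinear p N N_hom N_add hp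
  exact ⟨ℓ, hℓN, (hℓp ⟨x, Submodule.mem_span_singleton_self x⟩).trans
    (LinearPMap.mkSpanSingleton'_apply_self _ _ _ _)⟩

end Sublinear

section MonotoneEnvelope

variable {E : Type*} [PartialOrder E] {f : E → ℝ} {y z : E}

noncomputable def monotoneEnvelope (f : E → ℝ) (y : E) : ℝ :=
  ⨅ z : Ici y, f z

theorem monotoneEnvelope_le (hf : BddBelow (range f)) (h : y ≤ z) :
    monotoneEnvelope f y ≤ f z :=
  ciInf_le (f := fun z : Ici y => f z) (hf.mono (range_comp_subset_range _ _)) ⟨z, h⟩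

theorem le_monotoneEnvelope {r : ℝ} (h : ∀ z, y ≤ z → r ≤ f z) : r ≤ monotoneEnvelope f y :=
  le_ciInf fun z => h z z.2

theorem monotoneEnvelope_eq (hf : BddBelow (range f)) (hy : ∀ z, y ≤ z → f y ≤ f z) :
    monotoneEnvelope f y = f y :=
  (monotoneEnvelope_le hf le_rfl).antisymm (le_monotoneEnvelope hy)

variable [AddCommGroup E]

theorem monotoneEnvelope_smul [Module ℝ E] [PosSMulMono ℝ E] (hf : BddBelow (range f))
    (f_hom : ∀ c : ℝ, 0 < c → ∀ v, f (c • v) = c * f v) {c : ℝ} (hc : 0 < c) (y : E) :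
    monotoneEnvelope f (c • y) = c * monotoneEnvelope f y := by
  apply le_antisymm
  · unfold monotoneEnvelope
    rw [Real.mul_iInf_of_nonneg hc.le]
    exact le_ciInf fun z =>
      (monotoneEnvelope_le hf (smul_le_smul_of_nonneg_left z.2 hc.le)).trans (f_hom c hc z).le
  · refine le_monotoneEnvelope fun z hz => ?_
    have hyz : y ≤ c⁻¹ • z := by
      simpa [smul_smul, inv_mul_cancel₀ hc.ne'] using
        smul_le_smul_of_nonneg_left hz (inv_nonneg.2 hc.le)
    calc c * monotoneEnvelope f y ≤ c * f (c⁻¹ • z) :=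
          mul_le_mul_of_nonneg_left (monotoneEnvelope_le hf hyz) hc.le
      _ = f z := by rw [← f_hom c hc, smul_smul, mul_inv_cancel₀ hc.ne', one_smul]

variable [IsOrderedAddMonoid E]

theorem monotoneEnvelope_add_le (hf : BddBelow (range f))
    (f_add : ∀ a b, f (a + b) ≤ f a + f b) (a b : E) :
    monotoneEnvelope f (a + b) ≤ monotoneEnvelope f a + monotoneEnvelope f b :=
  le_ciInf_add_ciInf fun z w => (monotoneEnvelope_le hf (add_le_add z.2 w.2)).trans (f_add z w)

theorem nonneg_of_le_monotoneEnvelope (hf : BddBelow (range f)) (hf0 : f 0 = 0)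
    {ℓ : E →+ ℝ} (hℓ : ∀ y, ℓ y ≤ monotoneEnvelope f y) {v : E} (hv : 0 ≤ v) : 0 ≤ ℓ v := by
  have h := (hℓ (-v)).trans (monotoneEnvelope_le hf (neg_nonpos.2 hv))
  rw [map_neg, hf0] at h
  linarith

end MonotoneEnvelope

theorem LinearMap.apply_eq_sum_mul_single {ι : Type*} [Fintype ι] [DecidableEq ι]
    (ℓ : (ι → ℝ) →ₗ[ℝ] ℝ) (v : ι → ℝ) : ℓ v = ∑ i, ℓ (Pi.single i 1) * v i := by
  conv_lhs => rw [pi_eq_sum_univ' v, map_sum]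
  simp only [map_smul, smul_eq_mul, mul_comm]

theorem monotone_norm_nonneg_subgradient_general (n : ℕ) (f : (Fin n → ℝ) → ℝ)
    (hnonneg : ∀ v, 0 ≤ f v)
    (hsub : ∀ v w, f (v + w) ≤ f v + f w)
    (hhom : ∀ (c : ℝ) (v), f (c • v) = |c| * f v)
    (hmono : ∀ v w : Fin n → ℝ, (∀ i, 0 ≤ v i) → (∀ i, v i ≤ w i) → f v ≤ f w)
    (x : Fin n → ℝ) (hx : ∀ i, 0 ≤ x i) :
    ∃ g : Fin n → ℝ, (∀ i, 0 ≤ g i) ∧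
      ∀ y : Fin n → ℝ, f x + ∑ i, g i * (y i - x i) ≤ f y := by
  classical
  have hbdd : BddBelow (range f) := ⟨0, forall_mem_range.2 hnonneg⟩
  have f_hom : ∀ c : ℝ, 0 < c → ∀ v, f (c • v) = c * f v := fun c hc v => by
    rw [hhom, abs_of_pos hc]
  obtain ⟨ℓ, hℓ, hℓx⟩ := exists_linearMap_le_sublinear_eq
    (fun c hc => monotoneEnvelope_smul hbdd f_hom hc) (monotoneEnvelope_add_le hbdd hsub) x
  rw [monotoneEnvelope_eq hbdd fun z hz => hmono x z hx hz] at hℓx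
  refine ⟨fun i => ℓ (Pi.single i 1), fun i => ?_, fun y => ?_⟩
  · exact nonneg_of_le_monotoneEnvelope hbdd (by simpa using hhom 0 0)
      (ℓ := ℓ) hℓ (Pi.single_nonneg.2 zero_le_one)
  · calc f x + ∑ i, ℓ (Pi.single i 1) * (y i - x i) = ℓ x + ℓ (y - x) := by
          simp only [hℓx, ℓ.apply_eq_sum_mul_single (y - x), Pi.sub_apply]
      _ = ℓ y := by rw [← map_add, add_sub_cancel]
      _ ≤ f y := (hℓ y).trans (monotoneEnvelope_le hbdd le_rfl)

/-- A monotone norm has a coordinatewise nonnegative subgradient at every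
nonnegative point. -/
theorem monotone_norm_nonneg_subgradient (n : ℕ) (f : (Fin n → ℝ) → ℝ)
    (hnonneg : ∀ v, 0 ≤ f v)
    (hsub : ∀ v w, f (v + w) ≤ f v + f w)
    (hhom : ∀ (c : ℝ) (v), f (c • v) = |c| * f v)
    (hzero : ∀ v, f v = 0 ↔ v = 0)
    (hmono : ∀ v w : Fin n → ℝ, (∀ i, 0 ≤ v i) → (∀ i, v i ≤ w i) → f v ≤ f w)
    (x : Fin n → ℝ) (hx : ∀ i, 0 ≤ x i) :
    ∃ g : Fin n → ℝ, (∀ i, 0 ≤ g i) ∧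
      ∀ y : Fin n → ℝ, f x + ∑ i, g i * (y i - x i) ≤ f y :=
  monotone_norm_nonneg_subgradient_general n f hnonneg hsub hhom hmono x hx
end

section
/- Let f : ℝ^n_{≥0} → ℝ_{≥0} be a monotone norm, let (P ∪ F, δ) be a metric clustering space with |P| = n, let OPT > 0, and let O ⊆ F be a set of centers with f(δ(P, O)) ≤ OPT, where δ(P, O) = (δ(p, O))_{p∈P}. For p ∈ P and α > 0, let 𝟙_{p,α/3} ∈ {0,1}^P be the characteristic vector of the points within distance α/3 of p. If f(𝟙_{p,α/3}) ≥ 3·OPT/α, then δ(p, O) ≤ α. -/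
/-- Initial upper bounds: if the ball of radius `α/3` around `p₀` is dense enough,
namely `f(𝟙_{p₀,α/3}) ≥ 3·OPT/α`, then any solution `O` of cost at most `OPT`
has a center within distance `α` of `p₀`. -/
theorem dense_ball_upper_bound {M : Type*} [MetricSpace M] {ι : Type*} [Fintype ι]
    (pt : ι → M) (f : (ι → ℝ) → ℝ)
    (hmono : ∀ v w : ι → ℝ, (∀ i, 0 ≤ v i) → (∀ i, v i ≤ w i) → f v ≤ f w)
    (hhom : ∀ (c : ℝ) (v), 0 ≤ c → f (c • v) = c * f v)
    (O : Finset M) (hO : O.Nonempty)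
    (OPT : ℝ) (hOPT : 0 < OPT)
    (hcost : f (fun i => Metric.infDist (pt i) (O : Set M)) ≤ OPT)
    (p0 : ι) (α : ℝ) (hα : 0 < α)
    (hdense : 3 * OPT / α ≤ f (fun i => if dist (pt i) (pt p0) ≤ α / 3 then 1 else 0)) :
    Metric.infDist (pt p0) (O : Set M) ≤ α := by
  by_contra h
  push_neg at h
  set χ : ι → ℝ := fun i => if dist (pt i) (pt p0) ≤ α / 3 then 1 else 0 with hχ
  have hpt : ∀ i, (2 * α / 3) * χ i ≤ Metric.infDist (pt i) (O : Set M) := by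
    intro i
    by_cases hi : dist (pt i) (pt p0) ≤ α / 3
    · simp only [hχ, hi, if_true, mul_one]
      have h1 : Metric.infDist (pt p0) (O : Set M) ≤
          Metric.infDist (pt i) (O : Set M) + dist (pt p0) (pt i) :=
        Metric.infDist_le_infDist_add_dist
      have h2 : dist (pt p0) (pt i) ≤ α / 3 := by rwa [dist_comm]
      linarith
    · simp only [hχ, hi, if_false, mul_zero]
      exact Metric.infDist_nonneg
  have hχnn : ∀ i, 0 ≤ (2 * α / 3) * χ i := by
    intro i
    by_cases hi : dist (pt i) (pt p0) ≤ α / 3 <;> simp [hχ, hi] <;> positivity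
  have key : f ((2 * α / 3) • χ) ≤ OPT := by
    refine le_trans (hmono _ _ hχnn hpt) hcost
  rw [hhom _ _ (by positivity)] at key
  have : (2 * α / 3) * (3 * OPT / α) ≤ (2 * α / 3) * f χ :=
    mul_le_mul_of_nonneg_left hdense (by positivity)
  have heq : (2 * α / 3) * (3 * OPT / α) = 2 * OPT := by
    field_simp
  linarith
end

section
/- Let (X, δ) be a metric space and let ε ∈ (0,1). Suppose p, p', x_κ, and X (a set of points) satisfy: δ(p, x_κ) ≤ (1+ε/10)r, δ(p', x_κ) ≤ (1+ε/10)r', δ(p', q) ≤ 1000·k·r'/ε for some q ∈ X, and r' ≤ ε²·r/(10⁴·k) with k ≥ 1, r > 0. Then δ(p, X) ≤ (1 + ε/4)·r, where δ(p, X) = min_{x ∈ X} δ(p, x). -/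
/-- Core metric computation of the aspect-ratio lemma. -/
theorem aspect_ratio_core {M : Type*} [MetricSpace M]
    (ε : ℝ) (hε0 : 0 < ε) (hε1 : ε < 1)
    (k r r' : ℝ) (hk : 1 ≤ k) (hr : 0 < r)
    (p p' xκ q : M) (Xs : Set M) (hq : q ∈ Xs)
    (h1 : dist p xκ ≤ (1 + ε / 10) * r)
    (h2 : dist p' xκ ≤ (1 + ε / 10) * r')
    (h3 : dist p' q ≤ 1000 * k * r' / ε)
    (h4 : r' ≤ ε ^ 2 * r / (10 ^ 4 * k)) :
    Metric.infDist p Xs ≤ (1 + ε / 4) * r := by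
  have hr' : 0 ≤ r' := by nlinarith [dist_nonneg (x := p') (y := xκ)]
  have hk0 : (0:ℝ) < k := by linarith
  have h4' : r' * (10 ^ 4 * k) ≤ ε ^ 2 * r := by
    rw [← le_div_iff₀ (by positivity)]; exact h4
  have h3' : dist p' q * ε ≤ 1000 * k * r' := by
    rw [← le_div_iff₀ hε0]; exact h3
  have key : dist p q ≤ (1 + ε / 4) * r := by
    have := dist_triangle p xκ q
    have := dist_triangle xκ p' q
    rw [dist_comm xκ p'] at this
    have e1 : dist p' q ≤ ε * r / 10 := by
      have h5 : r' * (10 ^ 4 * 1) ≤ r' * (10 ^ 4 * k) :=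
        mul_le_mul_of_nonneg_left (by nlinarith) hr'
      have h6 : dist p' q * ε ≤ ε * (ε * r) / 10 := by nlinarith
      nlinarith [mul_pos hε0 hr, dist_nonneg (x := p') (y := q)]
    have e2 : dist p' xκ ≤ ε * r / 100 := by
      have h5 : r' * (10 ^ 4 * 1) ≤ r' * (10 ^ 4 * k) :=
        mul_le_mul_of_nonneg_left (by nlinarith) hr'
      nlinarith [sq_nonneg ε, mul_pos hε0 hr]
    nlinarith
  exact le_trans (Metric.infDist_le_dist_of_mem hq) key
end

section
/- Let w : P → ℝ_{≥0} be weights on a finite point set P in a metric space, X and O finite sets of centers, ε ∈ (0,1), and suppose Σ_p w(p)·δ(p, X) > (1+ε)·Σ_p w(p)·δ(p, O). Let W = {p ∈ P : δ(p, X) > (1 + ε/3)·δ(p, O)}. Then Σ_{p∈W} w(p)·δ(p, X) ≥ (ε/10)·Σ_{p∈P} w(p)·δ(p, X). -/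
open Finset in
/-- Averaging argument: (ε/3)-witnesses carry at least an ε/10 fraction of the
total weighted cost of the current solution `X`. -/
theorem witnesses_contribution {M : Type*} [MetricSpace M] {ι : Type*} [Fintype ι]
    (pt : ι → M) (w : ι → ℝ) (hw : ∀ i, 0 ≤ w i)
    (Xs O : Set M) (ε : ℝ) (hε0 : 0 < ε) (hε1 : ε < 1)
    (hgap : (1 + ε) * ∑ i, w i * Metric.infDist (pt i) O
        < ∑ i, w i * Metric.infDist (pt i) Xs) :
    ε / 10 * ∑ i, w i * Metric.infDist (pt i) Xs ≤
      ∑ i ∈ univ.filter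
          (fun i => (1 + ε / 3) * Metric.infDist (pt i) O < Metric.infDist (pt i) Xs),
        w i * Metric.infDist (pt i) Xs := by
  classical
  set p : ι → Prop :=
    fun i => (1 + ε / 3) * Metric.infDist (pt i) O < Metric.infDist (pt i) Xs with hp
  set S := ∑ i, w i * Metric.infDist (pt i) Xs with hS
  set T := ∑ i, w i * Metric.infDist (pt i) O with hT
  set A := ∑ i ∈ univ.filter p, w i * Metric.infDist (pt i) Xs with hA
  set B := ∑ i ∈ univ.filter (fun i => ¬ p i), w i * Metric.infDist (pt i) Xs with hB
  have hsplit : A + B = S := Finset.sum_filter_add_sum_filter_not _ _ _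
  have hTnn : 0 ≤ T := Finset.sum_nonneg fun i _ =>
    mul_nonneg (hw i) Metric.infDist_nonneg
  have hSnn : 0 ≤ S := Finset.sum_nonneg fun i _ =>
    mul_nonneg (hw i) Metric.infDist_nonneg
  have hBle : B ≤ (1 + ε / 3) * T := by
    rw [hB, hT, Finset.mul_sum]
    calc ∑ i ∈ univ.filter (fun i => ¬ p i), w i * Metric.infDist (pt i) Xs
        ≤ ∑ i ∈ univ.filter (fun i => ¬ p i),
            (1 + ε / 3) * (w i * Metric.infDist (pt i) O) := by
          apply Finset.sum_le_sum
          intro i hi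
          have hnp : ¬ p i := (Finset.mem_filter.mp hi).2
          have hle : Metric.infDist (pt i) Xs ≤ (1 + ε / 3) * Metric.infDist (pt i) O :=
            le_of_not_gt hnp
          calc w i * Metric.infDist (pt i) Xs
              ≤ w i * ((1 + ε / 3) * Metric.infDist (pt i) O) :=
                mul_le_mul_of_nonneg_left hle (hw i)
            _ = (1 + ε / 3) * (w i * Metric.infDist (pt i) O) := by ring
      _ ≤ ∑ i, (1 + ε / 3) * (w i * Metric.infDist (pt i) O) := by
          apply Finset.sum_le_sum_of_subset_of_nonneg (Finset.filter_subset _ _)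
          intro i _ _
          exact mul_nonneg (by linarith) (mul_nonneg (hw i) Metric.infDist_nonneg)
  nlinarith [mul_le_mul_of_nonneg_left hBle (le_of_lt hε0),
    mul_nonneg hε0.le hSnn, mul_nonneg hε0.le hTnn,
    mul_lt_mul_of_pos_left hgap hε0]
end

section
/- Let (X, δ) be a metric space, and let p₁, …, p_m be points processed in non-decreasing order of associated radii u(p₁) ≤ … ≤ u(p_m). Greedily mark p_i if ball(p_i, u(p_i)) is disjoint from ball(p_j, u(p_j)) for all marked j < i. Then for every unmarked point p', there is a marked point p with u(p) ≤ u(p') and δ(p, p') ≤ u(p) + u(p'); consequently, if a set of centers X contains, for every marked point p, a center within distance (3/2)·u(p) of p, then every point p' (marked or not) satisfies δ(p', X) ≤ 4·u(p'). -/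
/-- Plesník-style greedy argument. Points are processed in non-decreasing order of
radii and marked greedily if their ball is disjoint from all earlier marked balls.
Then every unmarked point is close to a marked point with smaller radius, and any
set of centers `(3/2)`-approximately covering all marked points `4`-approximately
covers all points. -/
theorem greedy_marking_coverage {M : Type*} [MetricSpace M] (m : ℕ)
    (p : Fin m → M) (u : Fin m → ℝ) (hu : ∀ i, 0 ≤ u i) (hmono : Monotone u)
    (Marked : Set (Fin m))
    (hgreedy : ∀ i, i ∉ Marked → ∃ j ∈ Marked, j < i ∧
      ¬ Disjoint (Metric.closedBall (p j) (u j)) (Metric.closedBall (p i) (u i))) :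
    (∀ i, i ∉ Marked → ∃ j ∈ Marked, u j ≤ u i ∧ dist (p j) (p i) ≤ u j + u i) ∧
    ∀ X : Set M, (∀ j ∈ Marked, ∃ x ∈ X, dist (p j) x ≤ 3 / 2 * u j) →
      ∀ i, Metric.infDist (p i) X ≤ 4 * u i := by

  have key : ∀ i, i ∉ Marked → ∃ j ∈ Marked, u j ≤ u i ∧ dist (p j) (p i) ≤ u j + u i := by
    intro i hi
    obtain ⟨j, hjM, hji, hnd⟩ := hgreedy i hi
    refine ⟨j, hjM, hmono hji.le, ?_⟩
    rw [Set.not_disjoint_iff] at hnd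
    obtain ⟨z, hz1, hz2⟩ := hnd
    calc dist (p j) (p i) ≤ dist (p j) z + dist z (p i) := dist_triangle _ _ _
      _ ≤ u j + u i := add_le_add (by rw [dist_comm]; exact Metric.mem_closedBall.mp hz1)
          (Metric.mem_closedBall.mp hz2)
  refine ⟨key, ?_⟩
  intro X hX i
  by_cases hi : i ∈ Marked
  · obtain ⟨x, hx, hd⟩ := hX i hi
    calc Metric.infDist (p i) X ≤ dist (p i) x := Metric.infDist_le_dist_of_mem hx
      _ ≤ 3 / 2 * u i := hd
      _ ≤ 4 * u i := by nlinarith [hu i]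
  · obtain ⟨j, hjM, hji, hd⟩ := key i hi
    obtain ⟨x, hx, hdx⟩ := hX j hjM
    calc Metric.infDist (p i) X ≤ dist (p i) x := Metric.infDist_le_dist_of_mem hx
      _ ≤ dist (p i) (p j) + dist (p j) x := dist_triangle _ _ _
      _ ≤ (u j + u i) + 3 / 2 * u j := by rw [dist_comm]; exact add_le_add hd hdx
      _ ≤ 4 * u i := by nlinarith [hu j]
end

section
/- Let w : P → ℝ_{≥0}, let O be a set of k centers in a metric space with finite point set P, and let OPT ≥ Σ_{p∈P} w(p)·δ(p, O). Fix p* ∈ P and r > 0, and suppose Σ_{p ∈ ball(p*, r) ∩ P} w(p) ≥ OPT/r and this sum is strictly positive. Then δ(p*, O) ≤ 2r. -/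
/-- Density-based upper bound for weighted k-median: if the total weight within
distance `r` of `p*` is at least `OPT/r` (and positive), then any set `O` of `k`
centers of cost at most `OPT` has a center within distance `2r` of `p*`. -/
theorem density_upper_bound {M : Type*} [MetricSpace M]
    (P : Finset M) (w : M → ℝ) (hw : ∀ p ∈ P, 0 ≤ w p)
    (k : ℕ) (O : Finset M) (hOk : O.card = k)
    (OPT : ℝ)
    (hOPT : ∑ p ∈ P, w p * Metric.infDist p (O : Set M) ≤ OPT)
    (pstar : M) (hpstar : pstar ∈ P) (r : ℝ) (hr : 0 < r)
    (hdense : OPT / r ≤ ∑ p ∈ P.filter (fun p => dist p pstar ≤ r), w p)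
    (hpos : 0 < ∑ p ∈ P.filter (fun p => dist p pstar ≤ r), w p) :
    Metric.infDist pstar (O : Set M) ≤ 2 * r := by
  by_contra h
  push_neg at h
  set d := Metric.infDist pstar (O : Set M) with hd
  set S := ∑ p ∈ P.filter (fun p => dist p pstar ≤ r), w p with hS
  -- each point in the ball has infDist > r indeed ≥ d - r
  have key : ∀ p ∈ P.filter (fun p => dist p pstar ≤ r),
      w p * (d - r) ≤ w p * Metric.infDist p (O : Set M) := by
    intro p hp
    rw [Finset.mem_filter] at hp
    have h1 : d ≤ Metric.infDist p (O : Set M) + dist pstar p :=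
      Metric.infDist_le_infDist_add_dist
    have h2 : d - r ≤ Metric.infDist p (O : Set M) := by
      have := dist_comm p pstar ▸ hp.2
      linarith
    exact mul_le_mul_of_nonneg_left h2 (hw p hp.1)
  have h3 : (d - r) * S ≤ ∑ p ∈ P.filter (fun p => dist p pstar ≤ r),
      w p * Metric.infDist p (O : Set M) := by
    rw [hS, Finset.mul_sum]
    refine Finset.sum_le_sum ?_
    intro p hp
    rw [mul_comm]
    exact key p hp
  have h4 : ∑ p ∈ P.filter (fun p => dist p pstar ≤ r),
      w p * Metric.infDist p (O : Set M) ≤ ∑ p ∈ P, w p * Metric.infDist p (O : Set M) := by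
    refine Finset.sum_le_sum_of_subset_of_nonneg (Finset.filter_subset _ _) ?_
    intro p hp _
    exact mul_nonneg (hw p hp) (Metric.infDist_nonneg)
  have h5 : r * S < (d - r) * S := by
    apply mul_lt_mul_of_pos_right _ hpos
    linarith
  have h6 : OPT ≤ r * S := by
    have := mul_le_mul_of_nonneg_left hdense (le_of_lt hr)
    rwa [mul_div_cancel₀ _ (ne_of_gt hr)] at this
  linarith
end
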